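/- Every sublocale S of a locale L is an intersection of sublocales of the form o(x) ∨ c(y): S = ⋂ { o(x) ∨ c(y) | S ⊆ o(x) ∨ c(y) }. -/
import Mathlib


/-- A sublocale of a locale (complete Heyting algebra / frame) `L`: a subset closed
under arbitrary meets and under `x ⇨ (-)` for every `x : L`. -/
def IsSublocale {L : Type*} [Order.Frame L] (S : Set L) : Prop :=
  (∀ T : Set L, T ⊆ S → sInf T ∈ S) ∧ ∀ x : L, ∀ s ∈ S, x ⇨ s ∈ S

/-- A localic map `f : L → M` is the right adjoint of a frame homomorphism `M → L`. -/
def IsLocalicMap {L M : Type*} [Order.Frame L] [Order.Frame M] (f : L → M) : Prop :=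
  ∃ g : FrameHom M L, GaloisConnection g f

/-- `P` is the sublocale-preimage function of `f`: for each sublocale `T` of `M`,
`P T` is the largest sublocale of `L` contained in the set-theoretic preimage `f ⁻¹' T`. -/
def IsPreimageFn {L M : Type*} [Order.Frame L] [Order.Frame M] (f : L → M)
    (P : Set M → Set L) : Prop :=
  ∀ T : Set M, IsSublocale T →
    IsSublocale (P T) ∧ P T ⊆ f ⁻¹' T ∧
      ∀ S : Set L, IsSublocale S → S ⊆ f ⁻¹' T → S ⊆ P T

/-- The join of two sublocales: the set of all meets of subsets of the union. -/
def joinSet {L : Type*} [Order.Frame L] (S T : Set L) : Set L :=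
  {x | ∃ A ⊆ S ∪ T, x = sInf A}

/-- A complemented sublocale: a sublocale having a complement in the lattice of
sublocales (meet is intersection, join is `joinSet`, bottom `{⊤}`, top `univ`). -/
def IsComplementedSubloc {L : Type*} [Order.Frame L] (S : Set L) : Prop :=
  IsSublocale S ∧ ∃ T : Set L, IsSublocale T ∧ S ∩ T = {⊤} ∧ joinSet S T = Set.univ

/-- An interior operator on a locale `L`, acting on sublocales. -/
def IsInteriorOp {L : Type*} [Order.Frame L] (i : Set L → Set L) : Prop :=
  (∀ S, IsSublocale S → IsSublocale (i S)) ∧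
  (∀ S, IsSublocale S → i S ⊆ S) ∧
  (∀ S T, IsSublocale S → IsSublocale T → S ⊆ T → i S ⊆ i T) ∧
  i Set.univ = Set.univ

/-- An 𝔥 operator on a locale `L`, acting on complemented sublocales. -/
def IsHOp {L : Type*} [Order.Frame L] (h : Set L → Set L) : Prop :=
  (∀ S, IsComplementedSubloc S → IsComplementedSubloc (h S)) ∧
  (∀ S, IsComplementedSubloc S → S ∩ h S ⊆ S) ∧
  (∀ S T, IsComplementedSubloc S → IsComplementedSubloc T → S ⊆ T → S ∩ h S ⊆ T ∩ h T) ∧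
  h Set.univ = Set.univ

/-- Every sublocale `S` is the intersection of the sublocales of the form
`o(x) ∨ c(y)` containing it. -/
theorem sublocale_eq_inter_open_join_closed {L : Type*} [Order.Frame L]
    (S : Set L) (hS : IsSublocale S) :
    S = ⋂₀ {A : Set L |
      (∃ x y : L, A = joinSet {w : L | ∃ z : L, w = x ⇨ z} (Set.Ici y)) ∧ S ⊆ A} := by
  classical
  set ν : L → L := fun a => sInf {s | s ∈ S ∧ a ≤ s} with hν
  have hνS : ∀ a, ν a ∈ S := fun a => hS.1 _ (fun s hs => hs.1)
  have hleν : ∀ a, a ≤ ν a := fun a => le_sInf (fun s hs => hs.2)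
  have hνle : ∀ a, ∀ s ∈ S, a ≤ s → ν a ≤ s := fun a s hs ha => sInf_le ⟨hs, ha⟩
  -- S is contained in each o(a) ∨ c(ν a)
  have hsub : ∀ a : L, S ⊆ joinSet {w : L | ∃ z : L, w = a ⇨ z} (Set.Ici (ν a)) := by
    intro a s hs
    refine ⟨{a ⇨ s, (a ⇨ s) ⇨ s}, ?_, ?_⟩
    · intro w hw
      rcases hw with hw | hw
      · exact Or.inl ⟨s, hw⟩
      · simp only [Set.mem_singleton_iff] at hw
        subst hw
        refine Or.inr (hνle a _ (hS.2 _ _ hs) ?_)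
        rw [le_himp_iff, inf_comm]
        exact himp_inf_le
    · rw [sInf_pair]
      refine le_antisymm (le_inf ?_ ?_) ?_
      · exact le_himp_iff.2 inf_le_left
      · exact le_himp_iff.2 inf_le_left
      · rw [inf_comm]; exact himp_inf_le
  apply le_antisymm
  · intro s hs
    exact fun A hA => hA.2 hs
  · intro t ht
    have h1 : t ∈ joinSet {w : L | ∃ z : L, w = t ⇨ z} (Set.Ici (ν t)) :=
      ht _ ⟨⟨t, ν t, rfl⟩, hsub t⟩
    obtain ⟨A, hA, htA⟩ := h1
    -- split A into the open part and the closed part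
    set A₁ : Set L := A ∩ {w : L | ∃ z : L, w = t ⇨ z} with hA₁
    set A₂ : Set L := A \ {w : L | ∃ z : L, w = t ⇨ z} with hA₂
    have hAsplit : A = A₁ ∪ A₂ := by
      simp [hA₁, hA₂, Set.inter_union_diff]
    have ht2 : t = sInf A₁ ⊓ sInf A₂ := by
      rw [htA, hAsplit, sInf_union]
    -- sInf A₁ is of the form t ⇨ z
    have hu : sInf A₁ = t ⇨ sInf A₁ := by
      refine le_antisymm (le_himp_iff.2 inf_le_left) ?_
      apply le_sInf
      intro w hw
      obtain ⟨z, hz⟩ := hw.2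
      calc t ⇨ sInf A₁ ≤ t ⇨ w := himp_le_himp_left (sInf_le hw)
        _ = t ⇨ (t ⇨ z) := by rw [hz]
        _ = t ⇨ z := by rw [himp_himp, inf_idem]
        _ = w := hz.symm
    -- ν t ≤ sInf A₂
    have hv : ν t ≤ sInf A₂ := by
      apply le_sInf
      intro w hw
      rcases hA hw.1 with h | h
      · exact absurd h hw.2
      · exact h
    have htle : t ≤ sInf A₁ := ht2.le.trans inf_le_left
    have htz : t ≤ sInf A₁ := htle
    -- t ≤ sInf A₁ = t ⇨ sInf A₁ gives nothing new; show ν t ≤ sInf A₁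
    have hν1 : ν t ≤ sInf A₁ := by
      rw [hu, le_himp_iff]
      have : ν t ⊓ t = t := inf_eq_right.2 (hleν t)
      rw [this]
      exact htle
    have hνt : ν t ≤ t := (le_inf hν1 hv).trans ht2.ge
    have : t = ν t := le_antisymm (hleν t) hνt
    rw [this]
    exact hνS t
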